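/- Fix d ≥ 2 and extend the rook walk counting function a_d to integer arguments by setting a_d(n_1,…,n_d) = 0 whenever some n_i < 0. Then for all n_1,…,n_{d-1} ≥ 0 and all n_d ≥ 1: n_d · a_d(n_1,…,n_{d-2},n_{d-1},n_d) = (n_{d-1} − 1)·a_d(n_1,…,n_{d-2},n_{d-1}−1,n_d−1) + (n_{d-1} + 1)·a_d(n_1,…,n_{d-2},n_{d-1}+1,n_d−1) + (2 − n_d)·a_d(n_1,…,n_{d-2},n_{d-1},n_d−2) + (2n_d − 2n_{d-1} − 2)·a_d(n_1,…,n_{d-2},n_{d-1},n_d−1), where the equation is understood in ℤ. -/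

import Mathlib

/-- The set of `d`-dimensional rook walks from the origin to `v`: a walk is a
finite sequence of steps, each step adding a positive integer amount to
exactly one coordinate (a step is recorded as a pair of the chosen coordinate
and the positive amount added). -/
def RookWalks (d : ℕ) (v : Fin d → ℕ) : Set (List (Fin d × ℕ)) :=
  {L | (∀ s ∈ L, 0 < s.2) ∧
       ∀ i : Fin d, (L.map (fun s => if s.1 = i then s.2 else 0)).sum = v i}

/-- The number of `d`-dimensional rook walks from the origin to `v`. -/
noncomputable def rookWalkCount (d : ℕ) (v : Fin d → ℕ) : ℕ :=
  (RookWalks d v).ncard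

/-- The rook walk counting function extended to integer arguments:
it is `0` whenever some coordinate is negative. -/
noncomputable def rookWalkCountZ (d : ℕ) (v : Fin d → ℤ) : ℕ :=
  if ∀ i, 0 ≤ v i then rookWalkCount d (fun i => (v i).toNat) else 0

/-!
With `F = ∑ₙ aₙ xⁿ`, splitting off the first step of a walk gives `F = 1 + G * F` where
`G = ∑ⱼ xⱼ / (1 - xⱼ)`. Differentiating, `∂ᵢF = F² ∂ᵢG = F² / (1 - xᵢ)²`, so
`(1 - xᵢ)² ∂ᵢF = F²` for every coordinate `i`. The coefficient of `xʷ` on the left is a second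
difference of `a` in direction `i`; equating these second differences for `i = d - 1` and
`i = d - 2` at `w = n - e_d` gives the recurrence.
-/

open Finset Function

section Walks

variable {d : ℕ}

theorem nil_mem_rookWalks {v : Fin d → ℕ} : [] ∈ RookWalks d v ↔ v = 0 := by
  simp [RookWalks, funext_iff, eq_comm]

theorem cons_mem_rookWalks {v : Fin d → ℕ} {j : Fin d} {s : ℕ} {L : List (Fin d × ℕ)} :
    (j, s) :: L ∈ RookWalks d v ↔
      0 < s ∧ s ≤ v j ∧ L ∈ RookWalks d (update v j (v j - s)) := by
  simp only [RookWalks, Set.mem_ofPred_eq, List.forall_mem_cons, List.map_cons, List.sum_cons]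
  constructor
  · rintro ⟨⟨hs, hL⟩, hsum⟩
    have hj := hsum j
    simp only [if_true] at hj
    refine ⟨hs, by omega, hL, fun i => ?_⟩
    have hi := hsum i
    rcases eq_or_ne i j with rfl | hij
    · rw [update_self]; omega
    · rw [update_of_ne hij, if_neg hij.symm] at *; omega
  · rintro ⟨hs, hsv, hL, hsum⟩
    refine ⟨⟨hs, hL⟩, fun i => ?_⟩
    have hi := hsum i
    rcases eq_or_ne i j with rfl | hij
    · rw [update_self] at hi; rw [if_pos rfl]; omega
    · rw [update_of_ne hij] at hi; rw [if_neg hij.symm]; omega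

theorem rookWalks_zero : RookWalks d 0 = {[]} := by
  ext L
  rcases L with _ | ⟨⟨j, s⟩, L⟩
  · simp [nil_mem_rookWalks]
  · simp only [cons_mem_rookWalks, Pi.zero_apply, Set.mem_singleton_iff, reduceCtorEq,
      iff_false]
    omega

theorem rookWalks_eq_biUnion {v : Fin d → ℕ} (hv : v ≠ 0) :
    RookWalks d v = ⋃ p ∈ (↑(univ.sigma fun j => range (v j)) : Set ((_ : Fin d) × ℕ)),
      List.cons (p.1, v p.1 - p.2) '' RookWalks d (update v p.1 p.2) := by
  ext L
  rcases L with _ | ⟨⟨j, s⟩, L⟩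
  · simp [nil_mem_rookWalks, hv]
  simp only [cons_mem_rookWalks, Set.mem_iUnion, Set.mem_image, List.cons.injEq, Prod.mk.injEq,
    mem_coe, mem_sigma, mem_univ, mem_range, true_and, exists_prop]
  constructor
  · rintro ⟨hs, hsv, hL⟩
    exact ⟨⟨j, v j - s⟩, by simp only; omega, L, hL, ⟨rfl, by simp only; omega⟩, rfl⟩
  · rintro ⟨⟨i, c⟩, hc, L', hL', ⟨rfl, rfl⟩, rfl⟩
    simp only at hc ⊢
    refine ⟨by omega, by omega, ?_⟩
    rwa [Nat.sub_sub_self hc.le]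

theorem sum_update_lt {v : Fin d → ℕ} {j : Fin d} {c : ℕ} (hc : c < v j) :
    ∑ i, update v j c i < ∑ i, v i := by
  refine sum_lt_sum (fun i _ => ?_) ⟨j, mem_univ _, by simpa using hc⟩
  rcases eq_or_ne i j with rfl | hij
  · simpa using hc.le
  · simp [update_of_ne hij]

theorem rookWalks_finite (v : Fin d → ℕ) : (RookWalks d v).Finite := by
  rcases eq_or_ne v 0 with rfl | hv
  · rw [rookWalks_zero]; exact Set.finite_singleton _
  rw [rookWalks_eq_biUnion hv]
  refine (finite_toSet _).biUnion fun p hp => (rookWalks_finite _).image _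
termination_by ∑ i, v i
decreasing_by exact sum_update_lt (by simpa using hp)

theorem rookWalkCount_eq_ite_add_sum (v : Fin d → ℕ) :
    rookWalkCount d v = (if v = 0 then 1 else 0) +
      ∑ j, ∑ c ∈ range (v j), rookWalkCount d (update v j c) := by
  rcases eq_or_ne v 0 with rfl | hv
  · simp [rookWalkCount, rookWalks_zero]
  have hdisj : (↑(univ.sigma fun j => range (v j)) : Set ((_ : Fin d) × ℕ)).PairwiseDisjoint
      fun p => List.cons (p.1, v p.1 - p.2) '' RookWalks d (update v p.1 p.2) := by
    rintro ⟨i, c⟩ hp ⟨j, c'⟩ hq hpq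
    simp only [coe_sigma, Set.mem_sigma_iff, coe_range, Set.mem_Iio] at hp hq
    refine Set.disjoint_left.mpr ?_
    rintro _ ⟨L, -, rfl⟩ ⟨L', -, h⟩
    simp only [List.cons.injEq, Prod.mk.injEq] at h
    obtain ⟨⟨rfl, h⟩, -⟩ := h
    exact hpq (by rw [show c = c' by omega])
  rw [if_neg hv, zero_add, rookWalkCount, rookWalks_eq_biUnion hv,
    Set.Finite.ncard_biUnion (finite_toSet _) (fun p _ => (rookWalks_finite _).image _) hdisj,
    finsum_mem_coe_finset, sum_sigma]
  simp only [Set.ncard_image_of_injective _ List.cons_injective, rookWalkCount]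

end Walks

theorem Derivation.map_eq_sq_mul_of_eq_one_add_mul {R A : Type*} [CommRing R] [CommRing A]
    [Algebra R A] (D : Derivation R A A) {F G : A} (h : F = 1 + G * F) :
    D F = F ^ 2 * D G := by
  have hD : D F = G * D F + F * D G := by
    conv_lhs => rw [h]
    rw [map_add, D.map_one_eq_zero, D.leibniz, smul_eq_mul, smul_eq_mul, zero_add]
  linear_combination (-D F) * h + F * hD

theorem Finsupp.equivFunOnFinite_symm_toNat_update_add_one {σ : Type*} [Finite σ]
    [DecidableEq σ] {w : σ → ℤ} {i : σ} (hi : 0 ≤ w i) :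
    equivFunOnFinite.symm (fun j => (Function.update w i (w i + 1) j).toNat) =
      equivFunOnFinite.symm (fun j => (w j).toNat) + single i 1 := by
  ext j
  rcases eq_or_ne j i with rfl | hj
  · simp; omega
  · simp [Function.update_of_ne hj, Ne.symm hj]

namespace MvPowerSeries

open Finsupp (single equivFunOnFinite single_le_iff)

variable {σ R : Type*} [CommRing R]

theorem one_sub_X_sq_mul_pderiv_eq_sq [Fintype σ] {F : MvPowerSeries σ R}
    {H : σ → MvPowerSeries σ R} (hF : F = 1 + ∑ j, H j) (hH : ∀ j, (1 - X j) * H j = X j * F)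
    (i : σ) : (1 - X i) ^ 2 * pderiv R i F = F ^ 2 := by
  set w : σ → MvPowerSeries σ R := fun j => invOfUnit (1 - X j) 1
  have hw : ∀ j, w j * (1 - X j) = 1 := fun j => invOfUnit_mul _ _ (by simp)
  have hG : F = 1 + (∑ j, X j * w j) * F := by
    rw [sum_mul]
    conv_lhs => rw [hF]
    congr 1
    refine sum_congr rfl fun j _ => ?_
    linear_combination (-H j) * hw j + w j * hH j
  have hdw : ∀ j, pderiv R i (w j) = w j ^ 2 * pderiv R i (X j) := fun j => by
    rw [(pderiv R i).leibniz_of_mul_eq_one (hw j), map_sub, pderiv_one, smul_eq_mul]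
    ring
  have hdG : pderiv R i (∑ j, X j * w j) = w i ^ 2 := by
    rw [map_sum, sum_eq_single i]
    · rw [Derivation.leibniz, hdw, pderiv_X_self, smul_eq_mul, smul_eq_mul]
      linear_combination (-w i) * hw i
    · intro j _ hj
      rw [Derivation.leibniz, hdw, pderiv_X_of_ne hj]
      simp
    · simp
  rw [(pderiv R i).map_eq_sq_mul_of_eq_one_add_mul hG, hdG]
  linear_combination (F ^ 2 * (w i * (1 - X i) + 1)) * hw i

variable [Fintype σ]

noncomputable def intCoeff (w : σ → ℤ) : MvPowerSeries σ R →ₗ[R] R :=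
  if ∀ j, 0 ≤ w j then coeff (equivFunOnFinite.symm fun j => (w j).toNat) else 0

theorem intCoeff_of_nonneg {w : σ → ℤ} (hw : ∀ j, 0 ≤ w j) (P : MvPowerSeries σ R) :
    intCoeff w P = coeff (equivFunOnFinite.symm fun j => (w j).toNat) P := by
  simp [intCoeff, hw]

theorem intCoeff_of_not_nonneg {w : σ → ℤ} (hw : ¬ ∀ j, 0 ≤ w j) (P : MvPowerSeries σ R) :
    intCoeff w P = 0 := by
  simp [intCoeff, hw]

variable [DecidableEq σ]

theorem intCoeff_X_mul (w : σ → ℤ) (i : σ) (P : MvPowerSeries σ R) :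
    intCoeff w (X i * P) = intCoeff (update w i (w i - 1)) P := by
  by_cases hw : ∀ j, 0 ≤ w j
  · rcases (hw i).eq_or_lt with h0 | hpos
    · have hneg : ¬ ∀ j, 0 ≤ update w i (w i - 1) j := fun h => by
        have := h i; simp at this; omega
      rw [intCoeff_of_not_nonneg hneg, intCoeff_of_nonneg hw, X_def, coeff_monomial_mul,
        if_neg (by simp [single_le_iff]; omega)]
    · set w' := update w i (w i - 1)
      have hw' : ∀ j, 0 ≤ w' j := fun j => by
        rcases eq_or_ne j i with rfl | hj
        · simp [w']; omega
        · simpa [w', update_of_ne hj] using hw j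
      have hww' : update w' i (w' i + 1) = w := by simp [w']
      rw [intCoeff_of_nonneg hw, intCoeff_of_nonneg hw', ← hww',
        Finsupp.equivFunOnFinite_symm_toNat_update_add_one (hw' i), mul_comm, X_def,
        coeff_add_mul_monomial, mul_one]
  · obtain ⟨j, hj⟩ := not_forall.mp hw
    have hneg : ¬ ∀ k, 0 ≤ update w i (w i - 1) k := fun h => by
      have := h j
      rcases eq_or_ne j i with rfl | hji
      · simp at this; omega
      · rw [update_of_ne hji] at this; exact hj this
    rw [intCoeff_of_not_nonneg hw, intCoeff_of_not_nonneg hneg]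

theorem intCoeff_pderiv (w : σ → ℤ) (i : σ) (P : MvPowerSeries σ R) :
    intCoeff w (pderiv R i P) = (w i + 1) * intCoeff (update w i (w i + 1)) P := by
  by_cases hw : ∀ j, 0 ≤ w j
  · have hw' : ∀ j, 0 ≤ update w i (w i + 1) j := fun j => by
      rcases eq_or_ne j i with rfl | hj
      · simp; linarith [hw j]
      · simpa [update_of_ne hj] using hw j
    have hcast : (((w i).toNat : ℕ) : R) = w i := by
      rw [← Int.cast_natCast, Int.toNat_of_nonneg (hw i)]
    rw [intCoeff_of_nonneg hw, intCoeff_of_nonneg hw', coeff_pderiv,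
      Finsupp.equivFunOnFinite_symm_toNat_update_add_one (hw i), Finsupp.coe_equivFunOnFinite_symm,
      hcast, mul_comm]
  · rw [intCoeff_of_not_nonneg hw]
    by_cases hw' : ∀ j, 0 ≤ update w i (w i + 1) j
    · have hi : w i = -1 := by
        obtain ⟨j, hj⟩ := not_forall.mp hw
        have := hw' j
        rcases eq_or_ne j i with rfl | hji
        · simp at this; omega
        · rw [update_of_ne hji] at this; exact absurd this hj
      simp [hi]
    · rw [intCoeff_of_not_nonneg hw', mul_zero]

theorem intCoeff_one_sub_X_sq_mul_pderiv (w : σ → ℤ) (i : σ) (P : MvPowerSeries σ R) :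
    intCoeff w ((1 - X i) ^ 2 * pderiv R i P) =
      (w i + 1) * intCoeff (update w i (w i + 1)) P - 2 * w i * intCoeff w P +
        (w i - 1) * intCoeff (update w i (w i - 1)) P := by
  have hexpand : (1 - X i) ^ 2 * pderiv R i P = pderiv R i P - X i * pderiv R i P -
      X i * pderiv R i P + X i * (X i * pderiv R i P) := by ring
  rw [hexpand, map_add, map_sub, map_sub, intCoeff_X_mul, intCoeff_X_mul, intCoeff_X_mul,
    update_self, update_idem, intCoeff_pderiv, intCoeff_pderiv, intCoeff_pderiv, update_self,
    update_idem, update_self, update_idem, sub_add_cancel, update_eq_self,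
    show w i - 1 - 1 + 1 = w i - 1 by ring]
  push_cast
  ring

end MvPowerSeries

section Series

open MvPowerSeries
open Finsupp (single single_le_iff)

variable {d : ℕ}

noncomputable def rookSeries (d : ℕ) : MvPowerSeries (Fin d) ℤ := fun n => rookWalkCount d n

/-- The coefficient at `n` counts the rook walks to `n` whose first step moves coordinate `j`. -/
noncomputable def firstStepSeries (d : ℕ) (j : Fin d) : MvPowerSeries (Fin d) ℤ :=
  fun n => ∑ c ∈ range (n j), rookWalkCount d (update n j c)

theorem coeff_rookSeries (n : Fin d →₀ ℕ) : coeff n (rookSeries d) = rookWalkCount d n := rfl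

theorem coeff_firstStepSeries (j : Fin d) (n : Fin d →₀ ℕ) :
    coeff n (firstStepSeries d j) = ∑ c ∈ range (n j), (rookWalkCount d (update n j c) : ℤ) :=
  rfl

theorem rookSeries_eq_one_add_sum : rookSeries d = 1 + ∑ j, firstStepSeries d j := by
  ext n
  rw [coeff_rookSeries, rookWalkCount_eq_ite_add_sum, map_add, coeff_one, map_sum]
  simp [coeff_firstStepSeries]

theorem one_sub_X_mul_firstStepSeries (j : Fin d) :
    (1 - X j) * firstStepSeries d j = X j * rookSeries d := by
  ext n
  rw [sub_mul, one_mul, map_sub, X_def, coeff_monomial_mul, coeff_monomial_mul]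
  by_cases h : single j 1 ≤ n
  · obtain ⟨k, hk⟩ : ∃ k, n j = k + 1 := Nat.exists_eq_add_of_le' (single_le_iff.mp h)
    have hsub : ⇑(n - single j 1 : Fin d →₀ ℕ) = update n j k := by
      ext i
      rcases eq_or_ne i j with rfl | hij
      · simp [hk]
      · simp [update_of_ne hij, Ne.symm hij]
    simp only [if_pos h, one_mul, coeff_firstStepSeries, coeff_rookSeries, hsub, hk,
      update_self, update_idem, sum_range_succ]
    ring
  · have hj : n j = 0 := by simpa [single_le_iff] using h
    simp [coeff_firstStepSeries, hj]

theorem intCoeff_rookSeries (w : Fin d → ℤ) : intCoeff w (rookSeries d) = rookWalkCountZ d w := by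
  by_cases hw : ∀ j, 0 ≤ w j
  · rw [intCoeff_of_nonneg hw, coeff_rookSeries, rookWalkCountZ, if_pos hw]
    rfl
  · rw [intCoeff_of_not_nonneg hw, rookWalkCountZ, if_neg hw, Nat.cast_zero]

theorem rookWalkCountZ_second_difference (w : Fin d → ℤ) (i : Fin d) :
    (w i + 1) * (rookWalkCountZ d (update w i (w i + 1)) : ℤ) - 2 * w i * rookWalkCountZ d w +
        (w i - 1) * rookWalkCountZ d (update w i (w i - 1)) =
      intCoeff w (rookSeries d ^ 2) := by
  rw [← one_sub_X_sq_mul_pderiv_eq_sq rookSeries_eq_one_add_sum one_sub_X_mul_firstStepSeries i,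
    intCoeff_one_sub_X_sq_mul_pderiv]
  simp only [intCoeff_rookSeries, Int.cast_id]

end Series

theorem rookWalkCountZ_two_index {d : ℕ} {i₀ i₁ : Fin d} (hne : i₀ ≠ i₁) (v : Fin d → ℤ) :
    v i₁ * (rookWalkCountZ d v : ℤ) =
      (v i₀ - 1) * (rookWalkCountZ d (update (update v i₀ (v i₀ - 1)) i₁ (v i₁ - 1)) : ℤ) +
        (v i₀ + 1) * (rookWalkCountZ d (update (update v i₀ (v i₀ + 1)) i₁ (v i₁ - 1)) : ℤ) +
        (2 - v i₁) * (rookWalkCountZ d (update v i₁ (v i₁ - 2)) : ℤ) +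
        (2 * v i₁ - 2 * v i₀ - 2) * (rookWalkCountZ d (update v i₁ (v i₁ - 1)) : ℤ) := by
  have h₀ := rookWalkCountZ_second_difference (update v i₁ (v i₁ - 1)) i₀
  have h₁ := rookWalkCountZ_second_difference (update v i₁ (v i₁ - 1)) i₁
  rw [update_of_ne hne, ← update_comm hne, ← update_comm hne] at h₀
  rw [update_self, update_idem, update_idem, sub_add_cancel, update_eq_self, sub_sub,
    one_add_one_eq_two] at h₁
  linear_combination h₁ - h₀

/-- For `d ≥ 2`, the extended rook walk numbers satisfy, for all
`n₁,…,n_{d-1} ≥ 0` and `n_d ≥ 1`: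
`n_d·a(…,n_{d-1},n_d) = (n_{d-1}−1)·a(…,n_{d-1}−1,n_d−1)
 + (n_{d-1}+1)·a(…,n_{d-1}+1,n_d−1) + (2−n_d)·a(…,n_{d-1},n_d−2)
 + (2n_d−2n_{d-1}−2)·a(…,n_{d-1},n_d−1)`  (in `ℤ`). -/
theorem rook_two_index_recurrence (d : ℕ) (hd : 2 ≤ d) (v : Fin d → ℤ) :
    v ⟨d - 1, by omega⟩ * (rookWalkCountZ d v : ℤ)
      = (v ⟨d - 2, by omega⟩ - 1) *
          (rookWalkCountZ d (Function.update
            (Function.update v ⟨d - 2, by omega⟩ (v ⟨d - 2, by omega⟩ - 1))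
            ⟨d - 1, by omega⟩ (v ⟨d - 1, by omega⟩ - 1)) : ℤ)
      + (v ⟨d - 2, by omega⟩ + 1) *
          (rookWalkCountZ d (Function.update
            (Function.update v ⟨d - 2, by omega⟩ (v ⟨d - 2, by omega⟩ + 1))
            ⟨d - 1, by omega⟩ (v ⟨d - 1, by omega⟩ - 1)) : ℤ)
      + (2 - v ⟨d - 1, by omega⟩) *
          (rookWalkCountZ d (Function.update v
            ⟨d - 1, by omega⟩ (v ⟨d - 1, by omega⟩ - 2)) : ℤ)
      + (2 * v ⟨d - 1, by omega⟩ - 2 * v ⟨d - 2, by omega⟩ - 2) *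
          (rookWalkCountZ d (Function.update v
            ⟨d - 1, by omega⟩ (v ⟨d - 1, by omega⟩ - 1)) : ℤ) :=
  rookWalkCountZ_two_index (Fin.ne_of_val_ne (by simp only; omega)) v
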